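/- arXiv:2305.05096 — 3 statements merged into one kernel-verified Lean document; each statement's English description precedes it below -/
import Mathlib

section
/- For every integer n ≥ 2, the number g(n) of partitions of n that have no fixed point equals Σ_{m≥0} M(m,n), the number of partitions of n with nonnegative crank. -/
/-- `l` is a partition of `n`: a nonincreasing list of positive integers summing to `n`. -/
noncomputable def IsPartitionOf (n : ℕ) (l : List ℕ) : Prop :=
  l.Pairwise (· ≥ ·) ∧ (∀ x ∈ l, 0 < x) ∧ l.sum = n

/-- The partition `l` has a `k`-fixed point: `λ_i = i + k` for some (1-indexed) index `i`. -/
noncomputable def HasKFixedPoint (k : ℤ) (l : List ℕ) : Prop :=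
  ∃ i : Fin l.length, (l.get i : ℤ) = (i.val : ℤ) + 1 + k

/-- `f_k(n)`: the number of partitions of `n` with a `k`-fixed point. -/
noncomputable def fk (k : ℤ) (n : ℕ) : ℕ :=
  {l : List ℕ | IsPartitionOf n l ∧ HasKFixedPoint k l}.ncard

/-- `g_k(n)`: the number of partitions of `n` without a `k`-fixed point. -/
noncomputable def gk (k : ℤ) (n : ℕ) : ℕ :=
  {l : List ℕ | IsPartitionOf n l ∧ ¬ HasKFixedPoint k l}.ncard

/-- `mex_j(l)`: the smallest integer greater than `j` that is not a part of `l`. -/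
noncomputable def mexJ (j : ℕ) (l : List ℕ) : ℕ := sInf {m : ℕ | j < m ∧ m ∉ l}

/-- Dyson's crank of a partition. -/
noncomputable def crank (l : List ℕ) : ℤ :=
  if l.count 1 = 0 then (l.headI : ℤ)
  else ((l.filter (fun x => l.count 1 < x)).length : ℤ) - (l.count 1 : ℤ)

/-- `M(m,n)`: the number of partitions of `n` with crank `m`. -/
noncomputable def M (m : ℤ) (n : ℕ) : ℕ :=
  {l : List ℕ | IsPartitionOf n l ∧ crank l = m}.ncard

/-- `p(n)`: the number of partitions of `n`. -/
noncomputable def partitionCount (n : ℕ) : ℕ := {l : List ℕ | IsPartitionOf n l}.ncard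

/-- `p(n,j)`: the number of partitions of `n` into at most `j` parts. -/
noncomputable def pAtMost (n : ℕ) (j : ℤ) : ℕ :=
  {l : List ℕ | IsPartitionOf n l ∧ (l.length : ℤ) ≤ j}.ncard

/-- `g'_{-k}(n)`: partitions of `n` with at least `k` parts and no `-k`-fixed point. -/
noncomputable def gneg (k : ℕ) (n : ℕ) : ℕ :=
  {l : List ℕ | IsPartitionOf n l ∧ k ≤ l.length ∧
    ∀ i : Fin l.length, (l.get i : ℤ) ≠ (i.val : ℤ) + 1 - k}.ncard

/-- `(q;q)_i = ∏_{m=1}^{i} (1 - q^m)` as a formal power series over `ℤ`. -/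
noncomputable def qPoch (i : ℕ) : PowerSeries ℤ :=
  ∏ m ∈ Finset.range i, (1 - PowerSeries.X ^ (m + 1))

/-!
Index the parts from `0` and let `d` be the first index with `λ_d ≤ d + 1`. A fixed point
`λ_d = d + 1` can only sit there, since `λ_j ≥ λ_d > j + 1` for `j < d`. Deleting it and appending
`d + 1` ones gives a partition with at least `d + 1` ones in which only the first `d` parts can
exceed the number of ones, so its crank is negative. Conversely, a partition of negative crank has
`d` smaller than its number `ω` of ones (otherwise its first `d ≥ ω` parts all exceed `ω`), so its
last `d + 1` parts are ones, and they can be traded back for a part `d + 1` at index `d`. Both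
operations leave `d` unchanged, so they are mutually inverse.
-/

namespace FixedPointCrank

lemma getElem_le_of_mem_take {α : Type*} [Preorder α] {l : List α} (hl : l.Pairwise (· ≥ ·))
    {k : ℕ} (hk : k < l.length) {x : α} (hx : x ∈ l.take (k + 1)) : l[k] ≤ x := by
  obtain ⟨j, hj, rfl⟩ := List.mem_iff_getElem.1 hx
  rw [List.length_take] at hj
  rw [List.getElem_take]
  exact hl.rel_get_of_le (a := ⟨j, by omega⟩) (b := ⟨k, hk⟩) (by simp; omega)

lemma le_getElem_of_mem_drop {α : Type*} [Preorder α] {l : List α} (hl : l.Pairwise (· ≥ ·))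
    {k : ℕ} (hk : k < l.length) {x : α} (hx : x ∈ l.drop k) : x ≤ l[k] := by
  obtain ⟨j, hj, rfl⟩ := List.mem_iff_getElem.1 hx
  rw [List.length_drop] at hj
  rw [List.getElem_drop]
  exact hl.rel_get_of_le (a := ⟨k, hk⟩) (b := ⟨k + j, by omega⟩) (by simp)

lemma insertIdx_length_append {α : Type*} (a b : List α) (x : α) :
    (a ++ b).insertIdx a.length x = a ++ x :: b := by
  induction a with
  | nil => simp
  | cons y a ih => simp [ih]

noncomputable def fixedIndex (l : List ℕ) : ℕ := sInf {j | l.getD j 0 < j + 2}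

lemma getD_fixedIndex_lt (l : List ℕ) : l.getD (fixedIndex l) 0 < fixedIndex l + 2 :=
  Nat.sInf_mem (s := {j | l.getD j 0 < j + 2}) ⟨l.length, by simp⟩

lemma add_two_le_getD_of_lt_fixedIndex {l : List ℕ} {j : ℕ} (h : j < fixedIndex l) :
    j + 2 ≤ l.getD j 0 :=
  not_lt.1 (Nat.notMem_of_lt_sInf (s := {j | l.getD j 0 < j + 2}) h)

lemma fixedIndex_le_length (l : List ℕ) : fixedIndex l ≤ l.length :=
  Nat.sInf_le (by simp)

lemma fixedIndex_append {a r : List ℕ} (ha : ∀ x ∈ a, a.length + 1 ≤ x)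
    (hr : ∀ x ∈ r, x ≤ a.length + 1) : fixedIndex (a ++ r) = a.length := by
  apply le_antisymm
  · apply Nat.sInf_le
    show (a ++ r).getD a.length 0 < a.length + 2
    rw [List.getD_append_right _ _ _ _ le_rfl, Nat.sub_self]
    cases r with
    | nil => simp
    | cons x r => simpa [Nat.lt_succ_iff] using hr x (by simp)
  · by_contra! h
    have hlt := getD_fixedIndex_lt (a ++ r)
    rw [List.getD_append _ _ _ _ h, List.getD_eq_getElem _ _ h] at hlt
    have := ha _ (List.getElem_mem h)
    omega

lemma lt_of_mem_take_fixedIndex {l : List ℕ} (hl : l.Pairwise (· ≥ ·)) {x : ℕ}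
    (hx : x ∈ l.take (fixedIndex l)) : fixedIndex l < x := by
  obtain ⟨k, hk⟩ := Nat.exists_eq_add_one_of_ne_zero (n := fixedIndex l) fun h => by
    simp [h] at hx
  have hkl : k < l.length := by have := fixedIndex_le_length l; omega
  have hk_le := add_two_le_getD_of_lt_fixedIndex (l := l) (j := k) (by omega)
  rw [List.getD_eq_getElem _ _ hkl] at hk_le
  rw [hk] at hx ⊢
  have := getElem_le_of_mem_take hl hkl hx
  omega

lemma le_of_mem_drop_fixedIndex {l : List ℕ} (hl : l.Pairwise (· ≥ ·)) {x : ℕ}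
    (hx : x ∈ l.drop (fixedIndex l)) : x ≤ fixedIndex l + 1 := by
  have hlt : fixedIndex l < l.length := by
    by_contra! h
    simp [List.drop_eq_nil_of_le h] at hx
  have hfix_lt := getD_fixedIndex_lt l
  rw [List.getD_eq_getElem _ _ hlt] at hfix_lt
  have := le_getElem_of_mem_drop hl hlt hx
  omega

noncomputable def removeFixedPart (l : List ℕ) : List ℕ :=
  l.eraseIdx (fixedIndex l) ++ List.replicate (fixedIndex l + 1) 1

noncomputable def insertFixedPart (l : List ℕ) : List ℕ :=
  (l.take (l.length - (fixedIndex l + 1))).insertIdx (fixedIndex l) (fixedIndex l + 1)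

lemma crank_neg_iff (l : List ℕ) :
    crank l < 0 ↔ l.count 1 ≠ 0 ∧ (l.filter (l.count 1 < ·)).length < l.count 1 := by
  unfold crank
  split_ifs with h <;> simp [h]

section Shape

variable {a b : List ℕ}

lemma removeFixedPart_append_cons (ha : ∀ x ∈ a, a.length + 1 ≤ x)
    (hb : ∀ x ∈ b, x ≤ a.length + 1) :
    removeFixedPart (a ++ (a.length + 1) :: b) = a ++ b ++ List.replicate (a.length + 1) 1 := by
  have hfix : fixedIndex (a ++ (a.length + 1) :: b) = a.length :=
    fixedIndex_append ha (by simpa using hb)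
  rw [removeFixedPart, hfix, List.eraseIdx_append_of_length_le le_rfl]
  simp

lemma insertFixedPart_append_replicate (ha : ∀ x ∈ a, a.length + 1 ≤ x)
    (hb : ∀ x ∈ b, x ≤ a.length + 1) :
    insertFixedPart (a ++ b ++ List.replicate (a.length + 1) 1) = a ++ (a.length + 1) :: b := by
  have hfix : fixedIndex (a ++ (b ++ List.replicate (a.length + 1) 1)) = a.length := by
    refine fixedIndex_append ha fun x hx => ?_
    rcases List.mem_append.1 hx with hx | hx
    · exact hb x hx
    · rw [List.eq_of_mem_replicate hx]
      omega
  have htake : (a ++ b ++ List.replicate (a.length + 1) 1).take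
      ((a ++ b ++ List.replicate (a.length + 1) 1).length - (a.length + 1)) = a ++ b :=
    List.take_left' (by simp; omega)
  rw [insertFixedPart, List.append_assoc, hfix, ← List.append_assoc, htake,
    insertIdx_length_append]

lemma isPartitionOf_append_cons_iff {n : ℕ} (ha : ∀ x ∈ a, a.length + 1 ≤ x)
    (hb : ∀ x ∈ b, x ≤ a.length + 1) :
    IsPartitionOf n (a ++ (a.length + 1) :: b) ↔
      IsPartitionOf n (a ++ b ++ List.replicate (a.length + 1) 1) := by
  simp only [IsPartitionOf, List.pairwise_append, List.pairwise_cons, List.pairwise_replicate,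
    List.mem_append, List.mem_cons, List.mem_replicate, List.sum_append, List.sum_cons,
    List.sum_replicate, smul_eq_mul, mul_one]
  constructor
  · rintro ⟨⟨hsa, ⟨-, hsb⟩, -⟩, hpos, hsum⟩
    refine ⟨⟨⟨hsa, hsb, fun x hx y hy => (hb y hy).trans (ha x hx)⟩, by simp, ?_⟩, ?_, by omega⟩
    · rintro x hx y ⟨-, rfl⟩
      rcases hx with hx | hx
      · have := ha x hx
        omega
      · exact hpos x (Or.inr (Or.inr hx))
    · rintro x ((hx | hx) | ⟨-, rfl⟩)
      · exact hpos x (Or.inl hx)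
      · exact hpos x (Or.inr (Or.inr hx))
      · exact one_pos
  · rintro ⟨⟨⟨hsa, hsb, -⟩, -, -⟩, hpos, hsum⟩
    refine ⟨⟨hsa, ⟨hb, hsb⟩, ?_⟩, ?_, by omega⟩
    · rintro x hx y (rfl | hy)
      · exact ha x hx
      · exact (hb y hy).trans (ha x hx)
    · rintro x (hx | rfl | hx)
      · exact hpos x (Or.inl (Or.inl hx))
      · omega
      · exact hpos x (Or.inl (Or.inr hx))

lemma hasKFixedPoint_append_cons : HasKFixedPoint 0 (a ++ (a.length + 1) :: b) :=
  ⟨⟨a.length, by simp⟩, by simp⟩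

lemma crank_append_replicate_neg (hb : ∀ x ∈ b, x ≤ a.length + 1) :
    crank (a ++ b ++ List.replicate (a.length + 1) 1) < 0 := by
  set w := (a ++ b ++ List.replicate (a.length + 1) 1).count 1 with hw
  have hw_ge : a.length + 1 ≤ w := by simp [hw]; omega
  have hb_filter : b.filter (w < ·) = [] :=
    List.filter_eq_nil_iff.2 fun x hx => by have := hb x hx; simp; omega
  have hrep_filter : (List.replicate (a.length + 1) 1).filter (w < ·) = [] :=
    List.filter_eq_nil_iff.2 fun x hx => by rw [List.eq_of_mem_replicate hx]; simp; omega
  rw [crank_neg_iff, ← hw]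
  refine ⟨by omega, ?_⟩
  rw [List.filter_append, List.filter_append, hb_filter, hrep_filter]
  simpa using (List.length_filter_le _ a).trans_lt (by omega)

end Shape

lemma exists_eq_append_cons_of_hasKFixedPoint {l : List ℕ} (hl : l.Pairwise (· ≥ ·))
    (h : HasKFixedPoint 0 l) : ∃ a b : List ℕ, (∀ x ∈ a, a.length + 1 ≤ x) ∧
      (∀ x ∈ b, x ≤ a.length + 1) ∧ l = a ++ (a.length + 1) :: b := by
  obtain ⟨⟨i, hi⟩, hi_fix⟩ := h
  have hfix : l[i] = i + 1 := by simp at hi_fix; omega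
  have hlen : (l.take i).length = i := by simp; omega
  refine ⟨l.take i, l.drop (i + 1), fun x hx => ?_, fun x hx => ?_, ?_⟩
  · rw [hlen, ← hfix]
    exact getElem_le_of_mem_take hl hi ((List.take_sublist_take_left (by omega)).subset hx)
  · rw [hlen, ← hfix]
    exact le_getElem_of_mem_drop hl hi ((List.drop_sublist_drop_left l (by omega)).subset hx)
  · rw [hlen]
    conv_lhs => rw [← List.take_append_drop i l, List.drop_eq_getElem_cons hi, hfix]

lemma exists_eq_append_replicate_count_one {l : List ℕ} (hl : l.Pairwise (· ≥ ·))
    (hpos : ∀ x ∈ l, 0 < x) :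
    ∃ ν : List ℕ, (∀ x ∈ ν, 2 ≤ x) ∧ l = ν ++ List.replicate (l.count 1) 1 := by
  induction l with
  | nil => exact ⟨[], by simp⟩
  | cons y l ih =>
    rw [List.pairwise_cons] at hl
    obtain ⟨ν, hν, hl_eq⟩ := ih hl.2 fun x hx => hpos x (List.mem_cons_of_mem y hx)
    by_cases hy : y = 1
    · subst hy
      have hν_nil : ν = [] := List.eq_nil_iff_forall_not_mem.2 fun x hx => by
        have := hl.1 x (hl_eq ▸ List.mem_append_left _ hx)
        have := hν x hx
        omega
      refine ⟨[], by simp, ?_⟩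
      rw [List.count_cons_self, List.replicate_succ, List.nil_append, List.cons_inj_right]
      simpa [hν_nil] using hl_eq
    · have := hpos y List.mem_cons_self
      refine ⟨y :: ν, ?_, ?_⟩
      · rintro x (_ | ⟨_, hx⟩)
        · omega
        · exact hν x hx
      · rw [List.count_cons_of_ne hy, List.cons_append, ← hl_eq]

lemma fixedIndex_lt_count_one {l : List ℕ} (hl : l.Pairwise (· ≥ ·)) (h : crank l < 0) :
    fixedIndex l < l.count 1 := by
  obtain ⟨-, hc⟩ := (crank_neg_iff l).1 h
  by_contra! hle
  have hsub : (l.take (fixedIndex l)).Sublist (l.filter (l.count 1 < ·)) := by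
    have := (List.take_sublist (fixedIndex l) l).filter (l.count 1 < ·)
    rwa [List.filter_eq_self.2 fun x hx => by
      have := lt_of_mem_take_fixedIndex hl hx; simp; omega] at this
  have := hsub.length_le
  rw [List.length_take_of_le (fixedIndex_le_length l)] at this
  omega

lemma exists_eq_append_replicate_of_crank_neg {n : ℕ} {l : List ℕ} (hp : IsPartitionOf n l)
    (h : crank l < 0) : ∃ a b : List ℕ, (∀ x ∈ a, a.length + 1 ≤ x) ∧
      (∀ x ∈ b, x ≤ a.length + 1) ∧ l = a ++ b ++ List.replicate (a.length + 1) 1 := by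
  obtain ⟨hs, hpos, -⟩ := hp
  have hDw := fixedIndex_lt_count_one hs h
  set D := fixedIndex l
  set w := l.count 1
  obtain ⟨ν, hν, hl⟩ := exists_eq_append_replicate_count_one hs hpos
  have hDν : D ≤ ν.length := by
    by_contra! hlt
    have := add_two_le_getD_of_lt_fixedIndex hlt
    rw [hl, List.getD_append_right _ _ _ _ le_rfl, Nat.sub_self,
      List.getD_replicate _ (show 0 < w by omega)] at this
    omega
  have hdrop : l.drop D = ν.drop D ++ List.replicate w 1 := by
    rw [hl, List.drop_append_of_le_length hDν]
  have hlen : (l.take D).length = D := List.length_take_of_le (fixedIndex_le_length l)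
  refine ⟨l.take D, ν.drop D ++ List.replicate (w - (D + 1)) 1, fun x hx => ?_,
    fun x hx => ?_, ?_⟩
  · rw [hlen]
    exact lt_of_mem_take_fixedIndex hs hx
  · rw [hlen]
    apply le_of_mem_drop_fixedIndex hs
    rw [hdrop, List.mem_append]
    rcases List.mem_append.1 hx with hx | hx
    · exact Or.inl hx
    · exact Or.inr (List.mem_replicate.2 ⟨by omega, (List.mem_replicate.1 hx).2⟩)
  · rw [hlen]
    conv_lhs => rw [← List.take_append_drop D l, hdrop,
      show w = (w - (D + 1)) + (D + 1) by omega, List.replicate_add]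
    simp only [List.append_assoc]

lemma finite_setOf_isPartitionOf (n : ℕ) : {l : List ℕ | IsPartitionOf n l}.Finite := by
  refine Set.Finite.of_finite_image (f := ((↑) : List ℕ → Multiset ℕ)) ?_ ?_
  · refine (Set.finite_range fun p : Nat.Partition n => p.parts).subset ?_
    rintro _ ⟨l, ⟨-, hpos, hsum⟩, rfl⟩
    exact ⟨⟨l, fun hx => hpos _ hx, by simpa using hsum⟩, rfl⟩
  · intro l₁ h₁ l₂ h₂ h
    exact (Multiset.coe_eq_coe.1 h).eq_of_pairwise (fun _ _ _ _ h h' => le_antisymm h' h)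
      h₁.1 h₂.1

theorem ncard_hasKFixedPoint_eq_ncard_crank_neg (n : ℕ) :
    {l : List ℕ | IsPartitionOf n l ∧ HasKFixedPoint 0 l}.ncard =
      {l : List ℕ | IsPartitionOf n l ∧ crank l < 0}.ncard := by
  refine Set.BijOn.ncard_eq (f := removeFixedPart)
    (Set.InvOn.bijOn (f' := insertFixedPart) ⟨?_, ?_⟩ ?_ ?_)
  · rintro l ⟨hp, hfix⟩
    obtain ⟨a, b, ha, hb, rfl⟩ := exists_eq_append_cons_of_hasKFixedPoint hp.1 hfix
    rw [removeFixedPart_append_cons ha hb, insertFixedPart_append_replicate ha hb]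
  · rintro l ⟨hp, hc⟩
    obtain ⟨a, b, ha, hb, rfl⟩ := exists_eq_append_replicate_of_crank_neg hp hc
    rw [insertFixedPart_append_replicate ha hb, removeFixedPart_append_cons ha hb]
  · rintro l ⟨hp, hfix⟩
    obtain ⟨a, b, ha, hb, rfl⟩ := exists_eq_append_cons_of_hasKFixedPoint hp.1 hfix
    rw [removeFixedPart_append_cons ha hb]
    exact ⟨(isPartitionOf_append_cons_iff ha hb).1 hp, crank_append_replicate_neg hb⟩
  · rintro l ⟨hp, hc⟩
    obtain ⟨a, b, ha, hb, rfl⟩ := exists_eq_append_replicate_of_crank_neg hp hc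
    rw [insertFixedPart_append_replicate ha hb]
    exact ⟨(isPartitionOf_append_cons_iff ha hb).2 hp, hasKFixedPoint_append_cons⟩

end FixedPointCrank

theorem stmt2_general (n : ℕ) :
    gk 0 n = {l : List ℕ | IsPartitionOf n l ∧ 0 ≤ crank l}.ncard := by
  have hfin := FixedPointCrank.finite_setOf_isPartitionOf n
  have hfix : {l : List ℕ | IsPartitionOf n l ∧ HasKFixedPoint 0 l}.ncard + gk 0 n =
      {l : List ℕ | IsPartitionOf n l}.ncard :=
    Set.ncard_inter_add_ncard_sdiff_eq_ncard _ {l | HasKFixedPoint 0 l} hfin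
  have hnonneg : {l : List ℕ | IsPartitionOf n l ∧ 0 ≤ crank l} =
      {l : List ℕ | IsPartitionOf n l} \ {l | crank l < 0} := by
    ext l
    simp
  have hcrank : {l : List ℕ | IsPartitionOf n l ∧ crank l < 0}.ncard +
      {l : List ℕ | IsPartitionOf n l ∧ 0 ≤ crank l}.ncard =
      {l : List ℕ | IsPartitionOf n l}.ncard := by
    rw [hnonneg]
    exact Set.ncard_inter_add_ncard_sdiff_eq_ncard _ _ hfin
  have := FixedPointCrank.ncard_hasKFixedPoint_eq_ncard_crank_neg n
  omega

theorem stmt2 (n : ℕ) (hn : 2 ≤ n) :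
    gk 0 n = {l : List ℕ | IsPartitionOf n l ∧ 0 ≤ crank l}.ncard :=
  stmt2_general n
end

section
/- For every integer k ≥ 0 and every integer n ≥ 2, the number g_k(n) of partitions of n without a k-fixed point equals Σ_{m≥−k} M(m,n), the number of partitions of n with crank at least −k. -/
/-!
A partition has at most one `k`-fixed point. Replacing a fixed part `λ_i = i + k` by `i + k`
parts equal to `1` yields a partition with `ω ≥ i + k` ones and at most `i - 1` parts larger
than `ω`, hence crank `≤ (i - 1) - (i + k) < -k`. Conversely, in a partition of crank `< -k` let
`i` be least such that at most `i - 1` parts exceed `i + k`; then there are at least `i + k`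
ones, and merging `i + k` of them into one part creates a `k`-fixed point at position `i`. Both
partitions determine the same `i`, so these maps are mutually inverse, and partitions with a
`k`-fixed point are equinumerous with partitions of crank `< -k`. Taking complements gives the
theorem.

The bijection only involves counts of parts, so it is carried out on multisets.
-/

section SortedLists

variable {α : Type*}

theorem List.Pairwise.lt_countP_iff [Preorder α] {l : List α} (hl : l.Pairwise (· ≥ ·))
    {p : α → Prop} [DecidablePred p] (hp : Monotone p) {j : ℕ} (hj : j < l.length) :
    j < l.countP (p ·) ↔ p l[j] := by
  induction l generalizing j with
  | nil => simp at hj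
  | cons a t ih =>
    obtain ⟨hat, ht⟩ := List.pairwise_cons.mp hl
    by_cases ha : p a
    · rw [List.countP_cons_of_pos (by simpa using ha)]
      cases j with
      | zero => simpa using ha
      | succ j => simpa using ih ht (by simpa using hj)
    · have hfail : ∀ b ∈ a :: t, ¬ p b := by
        rintro b (_ | ⟨_, hb⟩)
        · exact ha
        · exact fun hpb => ha (hp (hat b hb) hpb)
      rw [List.countP_eq_zero.mpr (by simpa using hfail)]
      simpa using hfail _ (List.getElem_mem hj)

theorem List.Pairwise.exists_getElem_eq_iff [LinearOrder α] {l : List α}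
    (hl : l.Pairwise (· ≥ ·)) {j : ℕ} {m : α} :
    (∃ h : j < l.length, l[j] = m) ↔ l.countP (m < ·) ≤ j ∧ j < l.countP (m ≤ ·) := by
  have hlt {j} (hj : j < l.length) :=
    hl.lt_countP_iff (p := (m < ·)) (fun _ _ h h' => h'.trans_le h) hj
  have hle {j} (hj : j < l.length) :=
    hl.lt_countP_iff (p := (m ≤ ·)) (fun _ _ h h' => h'.trans h) hj
  constructor
  · rintro ⟨hj, rfl⟩
    exact ⟨not_lt.mp ((hlt hj).not.mpr (lt_irrefl _)), (hle hj).mpr le_rfl⟩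
  · rintro ⟨h₁, h₂⟩
    have hj : j < l.length := h₂.trans_le List.countP_le_length
    exact ⟨hj, le_antisymm (not_lt.mp ((hlt hj).not.mp h₁.not_gt)) ((hle hj).mp h₂)⟩

end SortedLists

namespace Multiset

variable {α : Type*}

theorem countP_mono_left {s : Multiset α} {p q : α → Prop} [DecidablePred p]
    [DecidablePred q] (h : ∀ x ∈ s, p x → q x) : s.countP p ≤ s.countP q := by
  induction s using Quot.inductionOn with
  | h l => simpa using List.countP_mono_left (by simpa using h)

theorem countP_erase_add [DecidableEq α] {s : Multiset α} {a : α} (p : α → Prop)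
    [DecidablePred p] (ha : a ∈ s) :
    (s.erase a).countP p + (if p a then 1 else 0) = s.countP p := by
  conv_rhs => rw [← cons_erase ha]
  rw [countP_cons]

theorem countP_replicate (p : α → Prop) [DecidablePred p] (n : ℕ) (a : α) :
    (replicate n a).countP p = if p a then n else 0 := by
  rw [← coe_replicate, coe_countP, List.countP_replicate]
  simp

end Multiset

theorem Set.ncard_setOf_and_not {α : Type*} {P Q : α → Prop} (h : {x | P x}.Finite) :
    {x | P x ∧ ¬ Q x}.ncard = {x | P x}.ncard - {x | P x ∧ Q x}.ncard := by
  rw [← Set.ncard_sdiff (fun x hx => hx.1) (h.subset fun x hx => hx.1)]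
  congr 1
  ext x
  simp only [Set.mem_ofPred_eq, Set.mem_sdiff, not_and]
  tauto

open Multiset

theorem injOn_coe_setOf_isPartitionOf (n : ℕ) :
    Set.InjOn ((↑) : List ℕ → Multiset ℕ) {l | IsPartitionOf n l} :=
  fun _ h₁ _ h₂ h => List.Perm.eq_of_pairwise' h₁.1 h₂.1 (coe_eq_coe.mp h)

theorem finite_setOf_isPartitionOf (n : ℕ) : {l : List ℕ | IsPartitionOf n l}.Finite := by
  refine Set.Finite.of_finite_image ((Set.finite_range (Nat.Partition.parts (n := n))).subset ?_)
    (injOn_coe_setOf_isPartitionOf n)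
  rintro _ ⟨l, ⟨-, hpos, hsum⟩, rfl⟩
  exact ⟨⟨l, fun hx => hpos _ (mem_coe.mp hx), by rwa [sum_coe]⟩, rfl⟩

theorem ncard_setOf_isPartitionOf_and (n : ℕ) (P : Multiset ℕ → Prop) :
    {l : List ℕ | IsPartitionOf n l ∧ P l}.ncard =
      {s : Multiset ℕ | (∀ x ∈ s, 0 < x) ∧ s.sum = n ∧ P s}.ncard := by
  rw [← ((injOn_coe_setOf_isPartitionOf n).mono fun _ hl => hl.1).ncard_image]
  congr 1
  ext s
  constructor
  · rintro ⟨l, ⟨⟨-, hpos, hsum⟩, hP⟩, rfl⟩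
    exact ⟨hpos, by rwa [sum_coe], hP⟩
  · rintro ⟨hpos, hsum, hP⟩
    refine ⟨s.sort (· ≥ ·), ⟨⟨pairwise_sort _ _, fun x hx => hpos x ?_, ?_⟩, ?_⟩,
      sort_eq _ _⟩
    · rwa [← mem_coe, sort_eq] at hx
    · rw [← sum_coe, sort_eq, hsum]
    · rwa [sort_eq]

-- On the nonincreasing arrangement of `s`, the entry at the 0-indexed position `i` is `i + 1 + k`.
def IsKFixedIndex (k : ℕ) (s : Multiset ℕ) (i : ℕ) : Prop :=
  s.countP (i + 1 + k < ·) ≤ i ∧ i < s.countP (i + 1 + k ≤ ·)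

theorem hasKFixedPoint_iff {k : ℕ} {l : List ℕ} (hl : l.Pairwise (· ≥ ·)) :
    HasKFixedPoint k l ↔ ∃ i, IsKFixedIndex k l i := by
  simp only [IsKFixedIndex, coe_countP, ← hl.exists_getElem_eq_iff, HasKFixedPoint,
    List.get_eq_getElem]
  constructor
  · rintro ⟨⟨i, hi⟩, h⟩
    exact ⟨i, hi, by exact_mod_cast h⟩
  · rintro ⟨i, hi, h⟩
    exact ⟨⟨i, hi⟩, by simp [h]⟩

def HasCrankLtNeg (k : ℕ) (s : Multiset ℕ) : Prop :=
  s.countP (s.count 1 < ·) + k + 1 ≤ s.count 1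

theorem crank_lt_neg_iff {k : ℕ} (l : List ℕ) : crank l < -k ↔ HasCrankLtNeg k l := by
  rw [crank, HasCrankLtNeg, coe_count, coe_countP, List.countP_eq_length_filter]
  split_ifs with h
  · simp only [h]
    omega
  · omega

noncomputable def fixedPointIndex (k : ℕ) (s : Multiset ℕ) : ℕ :=
  sInf {j | s.countP (j + 1 + k < ·) ≤ j}

noncomputable def splitFixedPart (k : ℕ) (s : Multiset ℕ) : Multiset ℕ :=
  s.erase (fixedPointIndex k s + 1 + k) + replicate (fixedPointIndex k s + 1 + k) 1

noncomputable def joinOnes (k : ℕ) (s : Multiset ℕ) : Multiset ℕ :=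
  (fixedPointIndex k s + 1 + k) ::ₘ (s - replicate (fixedPointIndex k s + 1 + k) 1)

section Bijection

variable {k i : ℕ} {s : Multiset ℕ}

theorem fixedPointIndex_eq_iff :
    fixedPointIndex k s = i ↔
      s.countP (i + 1 + k < ·) ≤ i ∧ i ≤ s.countP (i + 1 + k ≤ ·) := by
  have hne : {j | s.countP (j + 1 + k < ·) ≤ j}.Nonempty := ⟨card s, countP_le_card _ _⟩
  constructor
  · rintro rfl
    refine ⟨Nat.sInf_mem hne, ?_⟩
    cases hi : fixedPointIndex k s with
    | zero => exact Nat.zero_le _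
    | succ j =>
      have hj := Nat.notMem_of_lt_sInf (show j < fixedPointIndex k s by omega)
      rw [Set.mem_ofPred_eq, not_le] at hj
      calc j + 1 ≤ s.countP (j + 1 + k < ·) := hj
        _ ≤ s.countP (j + 1 + 1 + k ≤ ·) := countP_mono_left fun x _ hx => by omega
  · rintro ⟨h₁, h₂⟩
    refine le_antisymm (Nat.sInf_le h₁) (le_csInf hne fun j hj => ?_)
    by_contra! hji
    have : s.countP (i + 1 + k ≤ ·) ≤ s.countP (j + 1 + k < ·) :=
      countP_mono_left fun x _ hx => by omega
    exact absurd hj (by rw [Set.mem_ofPred_eq]; omega)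

theorem IsKFixedIndex.fixedPointIndex_eq (h : IsKFixedIndex k s i) : fixedPointIndex k s = i :=
  fixedPointIndex_eq_iff.mpr ⟨h.1, h.2.le⟩

theorem IsKFixedIndex.mem (h : IsKFixedIndex k s i) : i + 1 + k ∈ s := by
  by_contra hm
  have : s.countP (i + 1 + k ≤ ·) ≤ s.countP (i + 1 + k < ·) :=
    countP_mono_left fun x hx hle => lt_of_le_of_ne hle (ne_of_mem_of_not_mem hx hm).symm
  exact absurd h (by rw [IsKFixedIndex]; omega)

theorem IsKFixedIndex.splitFixedPart_eq (h : IsKFixedIndex k s i) :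
    splitFixedPart k s = s.erase (i + 1 + k) + replicate (i + 1 + k) 1 := by
  rw [splitFixedPart, h.fixedPointIndex_eq]

theorem IsKFixedIndex.countP_lt_splitFixedPart_le {a : ℕ} (h : IsKFixedIndex k s i)
    (ha : i + 1 + k ≤ a) : (splitFixedPart k s).countP (a < ·) ≤ i := by
  have herase := countP_erase_add (i + 1 + k < ·) h.mem
  rw [if_neg (lt_irrefl _)] at herase
  have hmono :
      (s.erase (i + 1 + k)).countP (a < ·) ≤ (s.erase (i + 1 + k)).countP (i + 1 + k < ·) :=
    countP_mono_left fun x _ hx => by omega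
  rw [h.splitFixedPart_eq, countP_add, countP_replicate, if_neg (by omega)]
  have := h.1
  omega

theorem IsKFixedIndex.le_countP_splitFixedPart (h : IsKFixedIndex k s i) :
    i ≤ (splitFixedPart k s).countP (i + 1 + k ≤ ·) := by
  have herase := countP_erase_add (i + 1 + k ≤ ·) h.mem
  rw [if_pos le_rfl] at herase
  rw [h.splitFixedPart_eq, countP_add]
  have := h.2
  omega

theorem IsKFixedIndex.fixedPointIndex_splitFixedPart (h : IsKFixedIndex k s i) :
    fixedPointIndex k (splitFixedPart k s) = i :=
  fixedPointIndex_eq_iff.mpr ⟨h.countP_lt_splitFixedPart_le le_rfl, h.le_countP_splitFixedPart⟩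

theorem IsKFixedIndex.hasCrankLtNeg_splitFixedPart (h : IsKFixedIndex k s i) :
    HasCrankLtNeg k (splitFixedPart k s) := by
  have hω : i + 1 + k ≤ (splitFixedPart k s).count 1 := by
    rw [h.splitFixedPart_eq, count_add, count_replicate_self]
    omega
  have := h.countP_lt_splitFixedPart_le hω
  rw [HasCrankLtNeg]
  omega

theorem HasCrankLtNeg.fixedPointIndex_add_le_count_one (h : HasCrankLtNeg k s) :
    fixedPointIndex k s + 1 + k ≤ s.count 1 := by
  rw [HasCrankLtNeg] at h
  have : fixedPointIndex k s ≤ s.count 1 - (k + 1) := Nat.sInf_le <| by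
    rw [Set.mem_ofPred_eq, show s.count 1 - (k + 1) + 1 + k = s.count 1 by omega]
    omega
  omega

theorem HasCrankLtNeg.isKFixedIndex_joinOnes (h : HasCrankLtNeg k s) :
    IsKFixedIndex k (joinOnes k s) (fixedPointIndex k s) := by
  have hle := le_count_iff_replicate_le.mp h.fixedPointIndex_add_le_count_one
  obtain ⟨hlt, hge⟩ := fixedPointIndex_eq_iff.mp (rfl : fixedPointIndex k s = _)
  rw [joinOnes]
  generalize fixedPointIndex k s = i at hle hlt hge ⊢
  have hsub (p : ℕ → Prop) [DecidablePred p] :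
      (s - replicate (i + 1 + k) 1).countP p + (if p 1 then i + 1 + k else 0) = s.countP p := by
    rw [← countP_replicate, ← countP_add, tsub_add_cancel_of_le hle]
  constructor
  · have := hsub (i + 1 + k < ·)
    rw [countP_cons, if_neg (lt_irrefl _)]
    split_ifs at this <;> omega
  · have := hsub (i + 1 + k ≤ ·)
    rw [countP_cons, if_pos le_rfl]
    split_ifs at this <;> omega

theorem IsKFixedIndex.joinOnes_splitFixedPart (h : IsKFixedIndex k s i) :
    joinOnes k (splitFixedPart k s) = s := by
  rw [joinOnes, h.fixedPointIndex_splitFixedPart, h.splitFixedPart_eq, add_tsub_cancel_right,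
    cons_erase h.mem]

theorem HasCrankLtNeg.splitFixedPart_joinOnes (h : HasCrankLtNeg k s) :
    splitFixedPart k (joinOnes k s) = s := by
  rw [h.isKFixedIndex_joinOnes.splitFixedPart_eq, joinOnes, erase_cons_head,
    tsub_add_cancel_of_le (le_count_iff_replicate_le.mp h.fixedPointIndex_add_le_count_one)]

end Bijection

theorem bijOn_splitFixedPart (k n : ℕ) :
    Set.BijOn (splitFixedPart k)
      {s | (∀ x ∈ s, 0 < x) ∧ s.sum = n ∧ ∃ i, IsKFixedIndex k s i}
      {s | (∀ x ∈ s, 0 < x) ∧ s.sum = n ∧ HasCrankLtNeg k s} := by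
  refine Set.InvOn.bijOn ⟨fun s ⟨_, _, _, hi⟩ => hi.joinOnes_splitFixedPart,
    fun s ⟨_, _, hs⟩ => hs.splitFixedPart_joinOnes⟩ ?_ ?_
  · rintro s ⟨hpos, hsum, i, hi⟩
    refine ⟨fun x hx => ?_, ?_, hi.hasCrankLtNeg_splitFixedPart⟩
    · rw [hi.splitFixedPart_eq, mem_add] at hx
      rcases hx with hx | hx
      · exact hpos x (mem_of_mem_erase hx)
      · rw [eq_of_mem_replicate hx]
        exact Nat.one_pos
    · rw [hi.splitFixedPart_eq, sum_add, sum_replicate, smul_eq_mul, mul_one, ← hsum,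
        ← sum_erase hi.mem, add_comm]
  · rintro s ⟨hpos, hsum, hs⟩
    refine ⟨fun x hx => ?_, ?_, _, hs.isKFixedIndex_joinOnes⟩
    · rw [joinOnes, mem_cons] at hx
      rcases hx with rfl | hx
      · omega
      · exact hpos x (mem_of_le tsub_le_self hx)
    · have := congrArg sum (tsub_add_cancel_of_le
        (le_count_iff_replicate_le.mp hs.fixedPointIndex_add_le_count_one))
      rw [sum_add, sum_replicate, smul_eq_mul, mul_one] at this
      rw [joinOnes, sum_cons]
      omega

theorem ncard_hasKFixedPoint_eq_ncard_crank_lt (k n : ℕ) :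
    {l : List ℕ | IsPartitionOf n l ∧ HasKFixedPoint k l}.ncard =
      {l : List ℕ | IsPartitionOf n l ∧ crank l < -k}.ncard := by
  have hfix : {l : List ℕ | IsPartitionOf n l ∧ HasKFixedPoint k l} =
      {l | IsPartitionOf n l ∧ ∃ i, IsKFixedIndex k l i} :=
    Set.ext fun l => and_congr_right fun hl => hasKFixedPoint_iff hl.1
  simp only [hfix, crank_lt_neg_iff]
  rw [ncard_setOf_isPartitionOf_and n (fun s => ∃ i, IsKFixedIndex k s i),
    ncard_setOf_isPartitionOf_and n (HasCrankLtNeg k)]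
  exact (bijOn_splitFixedPart k n).ncard_eq

theorem stmt8_general (k : ℕ) (n : ℕ) :
    gk (k : ℤ) n = {l : List ℕ | IsPartitionOf n l ∧ -(k : ℤ) ≤ crank l}.ncard := by
  simp only [gk, ← not_lt]
  rw [Set.ncard_setOf_and_not (finite_setOf_isPartitionOf n),
    Set.ncard_setOf_and_not (finite_setOf_isPartitionOf n), ncard_hasKFixedPoint_eq_ncard_crank_lt]

theorem stmt8 (k : ℕ) (n : ℕ) (hn : 2 ≤ n) :
    gk (k : ℤ) n = {l : List ℕ | IsPartitionOf n l ∧ -(k : ℤ) ≤ crank l}.ncard :=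
  stmt8_general k n
end

section
/- For every integer k ≥ 0, as formal power series in q, Σ_{n≥0} p(n) q^n = Σ_{i≥0} q^{i(i+k)} / ((q;q)_{i+k} (q;q)_i), where the right-hand side converges coefficientwise (the term for index i has lowest degree i(i+k)). -/
/-!
Every partition contains a largest `i × (i + k)` rectangle in its top left corner (for `k = 0`,
its Durfee square). Removing it leaves the partition to the right of the rectangle, which has at
most `i` parts, and the partition below it, whose parts are at most `i + k`; conversely every such
pair glues back to a partition with that rectangle. Partitions with parts at most `j` have
generating function `1 / (q;q)_j` (Mathlib's product formula for restricted partitions), and by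
conjugation so do partitions with at most `j` parts. Summing over `i` gives the identity.
-/

open PowerSeries Finset

noncomputable def partitions (n : ℕ) : Finset (List ℕ) :=
  univ.image fun p : n.Partition => p.parts.sort (· ≥ ·)

theorem mem_partitions {n : ℕ} {l : List ℕ} : l ∈ partitions n ↔ IsPartitionOf n l := by
  simp only [partitions, mem_image, mem_univ, true_and]
  constructor
  · rintro ⟨p, rfl⟩
    refine ⟨Multiset.pairwise_sort _ _, fun x hx => p.parts_pos ((Multiset.mem_sort _).1 hx),
      ?_⟩
    rw [← Multiset.sum_coe, Multiset.sort_eq, p.parts_sum]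
  · rintro ⟨hs, hp, hsum⟩
    refine ⟨⟨l, fun hx => hp _ hx, by rw [Multiset.sum_coe, hsum]⟩, ?_⟩
    exact List.Perm.eq_of_pairwise' (Multiset.pairwise_sort _ _) hs
      (Multiset.coe_eq_coe.1 (Multiset.sort_eq _ _))

theorem partitionCount_eq_card (n : ℕ) : partitionCount n = #(partitions n) := by
  rw [partitionCount, ← Set.ncard_coe_finset]
  congr 1
  ext l
  simp [mem_partitions]

theorem mem_partitions_sum {l : List ℕ} :
    l ∈ partitions l.sum ↔ l.Pairwise (· ≥ ·) ∧ ∀ x ∈ l, 0 < x := by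
  simp [mem_partitions, IsPartitionOf]

theorem sum_eq_of_mem_partitions {n : ℕ} {l : List ℕ} (hl : l ∈ partitions n) : l.sum = n :=
  (mem_partitions.1 hl).2.2

open scoped PowerSeries.WithPiTopology

theorem card_filter_partitions_forall_le (j m : ℕ) :
    #{l ∈ partitions m | ∀ x ∈ l, x ≤ j} = #(Nat.Partition.restricted m (· ≤ j)) := by
  have hinj : Function.Injective fun p : m.Partition => p.parts.sort (· ≥ ·) := fun p q h =>
    Nat.Partition.ext (by simpa using congrArg ((↑) : List ℕ → Multiset ℕ) h)
  rw [partitions, filter_image, card_image_of_injective _ hinj, Nat.Partition.restricted]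
  simp only [Multiset.mem_sort]

theorem invOfUnit_qPoch (j : ℕ) :
    (qPoch j).invOfUnit 1 = mk fun m => (#(Nat.Partition.restricted m (· ≤ j)) : ℤ) := by
  have hprod := (Nat.Partition.hasProd_powerSeriesMk_card_restricted ℤ (· ≤ j)).tprod_eq
  rw [tprod_eq_prod (s := range j) fun i hi => if_neg (by simpa using hi)] at hprod
  rw [← hprod]
  refine left_inv_eq_right_inv (invOfUnit_mul _ _ (by simp [qPoch, map_prod])) ?_
  rw [qPoch, ← prod_mul_distrib]
  refine prod_eq_one fun i hi => ?_
  rw [if_pos (by simpa using hi)]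
  simp_rw [pow_mul]
  exact WithPiTopology.one_sub_mul_tsum_pow_of_constantCoeff_eq_zero (by simp)

theorem coeff_invOfUnit_qPoch (j m : ℕ) :
    coeff m ((qPoch j).invOfUnit 1) = #{l ∈ partitions m | ∀ x ∈ l, x ≤ j} := by
  rw [invOfUnit_qPoch, coeff_mk, card_filter_partitions_forall_le]

namespace YoungDiagram

theorem sum_rowLens (μ : YoungDiagram) : μ.rowLens.sum = μ.card := by
  rw [YoungDiagram.card, Finset.card_eq_sum_card_fiberwise (f := Prod.fst)
    (t := range (μ.colLen 0)) fun c hc => ?_]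
  · calc μ.rowLens.sum = ∑ i ∈ range (μ.colLen 0), μ.rowLen i := rfl
      _ = _ := sum_congr rfl fun i _ => μ.rowLen_eq_card
  · rw [mem_coe, mem_range, ← mem_iff_lt_colLen]
    exact μ.up_left_mem le_rfl (Nat.zero_le _) hc

theorem card_transpose (μ : YoungDiagram) : μ.transpose.card = μ.card := by
  simp [transpose, YoungDiagram.card]

theorem forall_mem_rowLens_le_iff (μ : YoungDiagram) (j : ℕ) :
    (∀ x ∈ μ.rowLens, x ≤ j) ↔ μ.rowLen 0 ≤ j := by
  simp only [rowLens, List.mem_map, List.mem_range, forall_exists_index, and_imp,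
    forall_apply_eq_imp_iff₂]
  refine ⟨fun h => ?_, fun h i _ => (μ.rowLen_anti 0 i i.zero_le).trans h⟩
  rcases Nat.eq_zero_or_pos (μ.colLen 0) with h0 | h0
  · have : (0, 0) ∉ μ := by rw [mem_iff_lt_colLen, h0]; exact lt_irrefl 0
    rw [mem_iff_lt_rowLen, not_lt, Nat.le_zero] at this
    rw [this]
    exact j.zero_le
  · exact h 0 h0

end YoungDiagram

theorem isPartitionOf_iff_exists_rowLens {n : ℕ} {l : List ℕ} :
    IsPartitionOf n l ↔ ∃ μ : YoungDiagram, μ.card = n ∧ μ.rowLens = l := by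
  constructor
  · rintro ⟨hs, hp, hsum⟩
    refine ⟨YoungDiagram.ofRowLens l hs.sortedGE, ?_, YoungDiagram.rowLens_ofRowLens_eq_self hp⟩
    rw [← YoungDiagram.sum_rowLens, YoungDiagram.rowLens_ofRowLens_eq_self hp, hsum]
  · rintro ⟨μ, rfl, rfl⟩
    exact ⟨μ.rowLens_sorted.pairwise, μ.pos_of_mem_rowLens, μ.sum_rowLens⟩

/-- The conjugate of a partition, read off the transposed Young diagram (`[]` off sorted lists). -/
noncomputable def conjugate (l : List ℕ) : List ℕ :=
  if h : l.Pairwise (· ≥ ·) then (YoungDiagram.ofRowLens l h.sortedGE).transpose.rowLens else []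

theorem conjugate_rowLens (μ : YoungDiagram) : conjugate μ.rowLens = μ.transpose.rowLens := by
  rw [conjugate, dif_pos μ.rowLens_sorted.pairwise, YoungDiagram.ofRowLens_to_rowLens_eq_self]

theorem conjugate_mem_partitions {n : ℕ} {l : List ℕ} (hl : l ∈ partitions n) :
    conjugate l ∈ partitions n := by
  obtain ⟨μ, rfl, rfl⟩ := isPartitionOf_iff_exists_rowLens.1 (mem_partitions.1 hl)
  rw [conjugate_rowLens, mem_partitions, isPartitionOf_iff_exists_rowLens]
  exact ⟨μ.transpose, μ.card_transpose, rfl⟩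

theorem conjugate_conjugate {n : ℕ} {l : List ℕ} (hl : l ∈ partitions n) :
    conjugate (conjugate l) = l := by
  obtain ⟨μ, -, rfl⟩ := isPartitionOf_iff_exists_rowLens.1 (mem_partitions.1 hl)
  rw [conjugate_rowLens, conjugate_rowLens, YoungDiagram.transpose_transpose]

theorem length_conjugate_le_iff {n : ℕ} {l : List ℕ} (hl : l ∈ partitions n) (j : ℕ) :
    (conjugate l).length ≤ j ↔ ∀ x ∈ l, x ≤ j := by
  obtain ⟨μ, -, rfl⟩ := isPartitionOf_iff_exists_rowLens.1 (mem_partitions.1 hl)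
  rw [conjugate_rowLens, YoungDiagram.length_rowLens, YoungDiagram.colLen_transpose,
    μ.forall_mem_rowLens_le_iff]

theorem card_filter_partitions_length_le (j m : ℕ) :
    #{l ∈ partitions m | l.length ≤ j} = #{l ∈ partitions m | ∀ x ∈ l, x ≤ j} := by
  refine card_nbij' conjugate conjugate (fun l hl => ?_) (fun l hl => ?_)
    (fun l hl => conjugate_conjugate (mem_filter.1 hl).1)
    (fun l hl => conjugate_conjugate (mem_filter.1 hl).1)
  · obtain ⟨hl, hlen⟩ := mem_filter.1 hl
    have hc := conjugate_mem_partitions hl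
    refine mem_filter.2 ⟨hc, (length_conjugate_le_iff hc j).1 ?_⟩
    rwa [conjugate_conjugate hl]
  · obtain ⟨hl, hle⟩ := mem_filter.1 hl
    exact mem_filter.2 ⟨conjugate_mem_partitions hl, (length_conjugate_le_iff hl j).2 hle⟩

/-- `durfee k l` is the side `i` of the `i × (i + k)` Durfee rectangle of a nonincreasing list `l`:
the first index `j` with `l[j] < j + 1 + k`, reading `l[j] = 0` past the end of `l`. -/
noncomputable def durfee (k : ℕ) (l : List ℕ) : ℕ :=
  Nat.find (p := fun j => l.getD j 0 < j + 1 + k) ⟨l.length, by simp⟩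

theorem durfee_eq_of_rect {k i : ℕ} {l : List ℕ} (hi : i ≤ l.length)
    (htake : ∀ x ∈ l.take i, i + k ≤ x) (hdrop : ∀ x ∈ l.drop i, x ≤ i + k) :
    durfee k l = i := by
  refine (Nat.find_eq_iff _).2 ⟨?_, fun t ht => ?_⟩
  · rcases lt_or_ge i l.length with h | h
    · have := hdrop _ (List.getElem_mem (l := l.drop i) (n := 0) (by simpa using h))
      simp only [List.getElem_drop, Nat.add_zero] at this
      rw [List.getD_eq_getElem _ _ h]
      omega
    · rw [List.getD_eq_default _ _ h]
      omega
  · have := htake _ (List.getElem_mem (l := l.take i) (n := t) (by simp; omega))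
    rw [List.getElem_take] at this
    rw [List.getD_eq_getElem _ _ (by omega)]
    omega

theorem durfee_eq_iff {k i : ℕ} {l : List ℕ} (hs : l.Pairwise (· ≥ ·)) :
    durfee k l = i ↔
      i ≤ l.length ∧ (∀ x ∈ l.take i, i + k ≤ x) ∧ ∀ x ∈ l.drop i, x ≤ i + k := by
  refine ⟨fun h => ?_, fun ⟨hi, htake, hdrop⟩ => durfee_eq_of_rect hi htake hdrop⟩
  obtain ⟨hstop, hbefore⟩ := (Nat.find_eq_iff _).1 h
  simp only [not_lt] at hbefore
  have hi : i ≤ l.length := by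
    by_contra! hlt
    have := hbefore l.length hlt
    rw [List.getD_eq_default _ _ le_rfl] at this
    omega
  refine ⟨hi, fun x hx => ?_, fun x hx => ?_⟩
  · obtain ⟨s, hs', rfl⟩ := List.mem_iff_getElem.1 hx
    simp only [List.length_take] at hs'
    have hlast := hbefore (i - 1) (by omega)
    rw [List.getD_eq_getElem _ _ (by omega)] at hlast
    have := hs.sortedGE.getElem_ge_getElem_of_le (i := i - 1) (j := s) (hi := by omega)
      (hj := by omega) (by omega)
    rw [List.getElem_take]
    omega
  · obtain ⟨s, hs', rfl⟩ := List.mem_iff_getElem.1 hx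
    simp only [List.length_drop] at hs'
    rw [List.getD_eq_getElem _ _ (by omega)] at hstop
    have := hs.sortedGE.getElem_ge_getElem_of_le (i := i + s) (j := i) (hi := by omega)
      (hj := by omega) (by omega)
    rw [List.getElem_drop]
    omega

theorem List.rightpad_filter_pos {s : List ℕ} (hs : s.Pairwise (· ≥ ·)) :
    (s.filter (0 < ·)).rightpad s.length 0 = s := by
  induction s with
  | nil => rfl
  | cons x s ih =>
    obtain ⟨hx, hs⟩ := List.pairwise_cons.1 hs
    rcases Nat.eq_zero_or_pos x with rfl | hpos
    · have hzero : ∀ y ∈ 0 :: s, y = 0 := by simpa using hx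
      rw [List.filter_eq_nil_iff.2 (by simpa using hzero), List.rightpad, List.length_nil,
        Nat.sub_zero, List.nil_append, eq_comm, List.eq_replicate_iff]
      exact ⟨rfl, hzero⟩
    · simp only [List.rightpad, List.length_cons] at ih ⊢
      rw [List.filter_cons_of_pos (by simpa using hpos), List.length_cons,
        Nat.add_sub_add_right, List.cons_append, ih hs]

/-- The `i × (i + k)` rectangle, with the parts of `μ` (at most `i` of them) added to its first
rows, stacked on top of `ν`. -/
def glueRect (k i : ℕ) (μ ν : List ℕ) : List ℕ := (μ.rightpad i 0).map (· + (i + k)) ++ ν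

def rightOfRect (k i : ℕ) (l : List ℕ) : List ℕ :=
  ((l.take i).map (· - (i + k))).filter (0 < ·)

section glueRect

variable {k i : ℕ} {μ ν : List ℕ}

theorem length_rightpad_of_le (hμ : μ.length ≤ i) : (μ.rightpad i 0).length = i := by
  rw [List.length_rightpad, max_eq_left hμ]

theorem take_glueRect (hμ : μ.length ≤ i) :
    (glueRect k i μ ν).take i = (μ.rightpad i 0).map (· + (i + k)) :=
  List.take_left' (by rw [List.length_map, length_rightpad_of_le hμ])

theorem drop_glueRect (hμ : μ.length ≤ i) : (glueRect k i μ ν).drop i = ν :=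
  List.drop_left' (by rw [List.length_map, length_rightpad_of_le hμ])

theorem sum_glueRect (hμ : μ.length ≤ i) :
    (glueRect k i μ ν).sum = μ.sum + i * (i + k) + ν.sum := by
  have hsum : ((μ.rightpad i 0).map (· + (i + k))).sum = μ.sum + i * (i + k) := by
    simp only [List.rightpad, List.map_append, List.map_replicate, zero_add, List.sum_append,
      List.sum_map_add, List.map_id_fun', id_eq, List.map_const', List.sum_replicate, smul_eq_mul]
    rw [add_assoc, ← add_mul, Nat.add_sub_cancel' hμ]
  rw [glueRect, List.sum_append, hsum]

theorem durfee_glueRect (hμ : μ.length ≤ i) (hν : ∀ x ∈ ν, x ≤ i + k) :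
    durfee k (glueRect k i μ ν) = i := by
  refine durfee_eq_of_rect ?_ ?_ ?_
  · simp only [glueRect, List.length_append, List.length_map, length_rightpad_of_le hμ]
    omega
  · rw [take_glueRect hμ, List.forall_mem_map]
    omega
  · rwa [drop_glueRect hμ]

theorem rightOfRect_glueRect (hμ : μ.length ≤ i) (hpos : ∀ x ∈ μ, 0 < x) :
    rightOfRect k i (glueRect k i μ ν) = μ := by
  rw [rightOfRect, take_glueRect hμ, List.map_map]
  simp only [Function.comp_def, Nat.add_sub_cancel, List.map_id', List.rightpad,
    List.filter_append]
  rw [List.filter_eq_self.2 (by simpa using hpos), List.filter_eq_nil_iff.2 (by simp),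
    List.append_nil]

theorem glueRect_mem_partitions (hμ : μ ∈ partitions μ.sum) (hμi : μ.length ≤ i)
    (hν : ν ∈ partitions ν.sum) (hνi : ∀ x ∈ ν, x ≤ i + k) :
    glueRect k i μ ν ∈ partitions (μ.sum + i * (i + k) + ν.sum) := by
  obtain ⟨hμs, hμp⟩ := mem_partitions_sum.1 hμ
  obtain ⟨hνs, hνp⟩ := mem_partitions_sum.1 hν
  have hpad : (μ.rightpad i 0).Pairwise (· ≥ ·) :=
    List.pairwise_append.2 ⟨hμs, List.pairwise_replicate.2 (Or.inr le_rfl),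
      fun _ _ _ hb => (List.eq_of_mem_replicate hb).symm ▸ Nat.zero_le _⟩
  refine mem_partitions.2 ⟨List.pairwise_append.2 ⟨?_, hνs, ?_⟩, ?_, sum_glueRect hμi⟩
  · exact List.pairwise_map.2 (hpad.imp fun h => Nat.add_le_add_right h _)
  · rw [List.forall_mem_map]
    exact fun _ _ b hb => (hνi b hb).trans (Nat.le_add_left _ _)
  · rw [glueRect, List.forall_mem_append, List.forall_mem_map]
    refine ⟨fun y hy => ?_, hνp⟩
    rcases List.mem_append.1 hy with hy | hy
    · exact (hμp y hy).trans_le (Nat.le_add_right _ _)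
    · have := List.length_pos_of_mem hy
      rw [List.length_replicate] at this
      omega

end glueRect

section rightOfRect

variable {k i : ℕ} {l : List ℕ}

theorem length_rightOfRect_le : (rightOfRect k i l).length ≤ i :=
  (List.length_filter_le _ _).trans (by simp)

theorem pairwise_map_sub_take (hs : l.Pairwise (· ≥ ·)) (c : ℕ) :
    ((l.take i).map (· - c)).Pairwise (· ≥ ·) :=
  (hs.sublist (List.take_sublist i l)).map _ fun _ _ h => Nat.sub_le_sub_right h c

theorem rightOfRect_mem_partitions (hs : l.Pairwise (· ≥ ·)) :
    rightOfRect k i l ∈ partitions (rightOfRect k i l).sum :=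
  mem_partitions_sum.2 ⟨(pairwise_map_sub_take hs _).filter _,
    fun x hx => by simpa using List.of_mem_filter hx⟩

theorem glueRect_rightOfRect (hs : l.Pairwise (· ≥ ·)) (hl : durfee k l = i) :
    glueRect k i (rightOfRect k i l) (l.drop i) = l := by
  obtain ⟨hi, htake, -⟩ := (durfee_eq_iff hs).1 hl
  have hpad : (rightOfRect k i l).rightpad i 0 = (l.take i).map (· - (i + k)) := by
    have hlen : ((l.take i).map (· - (i + k))).length = i := by simpa using hi
    have := List.rightpad_filter_pos (pairwise_map_sub_take (i := i) hs (i + k))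
    rwa [hlen] at this
  rw [glueRect, hpad, List.map_map]
  conv_rhs => rw [← List.take_append_drop i l]
  congr 1
  refine (List.map_congr_left fun x hx => ?_).trans (List.map_id _)
  exact Nat.sub_add_cancel (htake x hx)

end rightOfRect

theorem sum_rightOfRect_add_sum_drop {k i : ℕ} {l : List ℕ} (hs : l.Pairwise (· ≥ ·))
    (hl : durfee k l = i) : (rightOfRect k i l).sum + i * (i + k) + (l.drop i).sum = l.sum := by
  conv_rhs => rw [← glueRect_rightOfRect hs hl]
  exact (sum_glueRect length_rightOfRect_le).symm

theorem durfee_mul_le {k n : ℕ} {l : List ℕ} (hl : l ∈ partitions n) :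
    durfee k l * (durfee k l + k) ≤ n := by
  have := sum_rightOfRect_add_sum_drop (mem_partitions.1 hl).1 (rfl : durfee k l = _)
  rw [sum_eq_of_mem_partitions hl] at this
  omega

theorem drop_mem_partitions {n i : ℕ} {l : List ℕ} (hl : l ∈ partitions n) :
    l.drop i ∈ partitions (l.drop i).sum :=
  have ⟨hs, hp, _⟩ := mem_partitions.1 hl
  mem_partitions_sum.2 ⟨hs.sublist (List.drop_sublist i l),
    fun x hx => hp x (List.mem_of_mem_drop hx)⟩

theorem card_filter_partitions_durfee (k i m : ℕ) :
    #{l ∈ partitions (m + i * (i + k)) | durfee k l = i} =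
      ∑ p ∈ antidiagonal m, #{l ∈ partitions p.1 | ∀ x ∈ l, x ≤ i + k} *
        #{l ∈ partitions p.2 | l.length ≤ i} := by
  simp_rw [← card_product]
  rw [← card_sigma]
  refine card_nbij'
    (fun l => ⟨((l.drop i).sum, (rightOfRect k i l).sum), (l.drop i, rightOfRect k i l)⟩)
    (fun x => glueRect k i x.2.2 x.2.1) (fun l hl => ?_) (fun x hx => ?_) (fun l hl => ?_)
    (fun x hx => ?_) <;>
  simp only [mem_coe, mem_sigma, HasAntidiagonal.mem_antidiagonal, mem_product,
    mem_filter] at *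
  · obtain ⟨hlp, hl⟩ := hl
    have hs := (mem_partitions.1 hlp).1
    have hsum := sum_rightOfRect_add_sum_drop hs hl
    rw [sum_eq_of_mem_partitions hlp] at hsum
    exact ⟨by omega, ⟨drop_mem_partitions hlp, ((durfee_eq_iff hs).1 hl).2.2⟩,
      rightOfRect_mem_partitions hs, length_rightOfRect_le⟩
  · obtain ⟨⟨a, b⟩, ν, μ⟩ := x
    obtain ⟨hab, ⟨hν, hνi⟩, hμ, hμi⟩ := hx
    have hmem := glueRect_mem_partitions (k := k) (sum_eq_of_mem_partitions hμ ▸ hμ) hμi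
      (sum_eq_of_mem_partitions hν ▸ hν) hνi
    rw [sum_eq_of_mem_partitions hμ, sum_eq_of_mem_partitions hν] at hmem
    exact ⟨by convert hmem using 2; omega, durfee_glueRect hμi hνi⟩
  · exact glueRect_rightOfRect (mem_partitions.1 hl.1).1 hl.2
  · obtain ⟨⟨a, b⟩, ν, μ⟩ := x
    obtain ⟨-, ⟨hν, -⟩, hμ, hμi⟩ := hx
    simp only [drop_glueRect hμi, rightOfRect_glueRect hμi (mem_partitions.1 hμ).2.1,
      sum_eq_of_mem_partitions hμ, sum_eq_of_mem_partitions hν]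

theorem coeff_durfee_term (k i n : ℕ) :
    coeff n ((X : PowerSeries ℤ) ^ (i * (i + k)) * (qPoch (i + k)).invOfUnit 1 *
      (qPoch i).invOfUnit 1) = #{l ∈ partitions n | durfee k l = i} := by
  rw [mul_assoc, coeff_X_pow_mul']
  split_ifs with h
  · obtain ⟨m, rfl⟩ := Nat.exists_eq_add_of_le' h
    rw [Nat.add_sub_cancel, coeff_mul, card_filter_partitions_durfee, Nat.cast_sum]
    refine sum_congr rfl fun p _ => ?_
    rw [coeff_invOfUnit_qPoch, coeff_invOfUnit_qPoch, card_filter_partitions_length_le,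
      Nat.cast_mul]
  · refine (Nat.cast_eq_zero.2 (card_eq_zero.2 (filter_eq_empty_iff.2 fun l hl hi => ?_))).symm
    exact h (hi ▸ durfee_mul_le hl)

theorem stmt12 (k : ℕ) (n : ℕ) :
    (partitionCount n : ℤ) = ∑ i ∈ Finset.range (n + 1), (PowerSeries.coeff (R := ℤ) n)
      ((PowerSeries.X : PowerSeries ℤ) ^ (i * (i + k)) *
        (qPoch (i + k)).invOfUnit 1 * (qPoch i).invOfUnit 1) := by
  have hrange : ∀ l ∈ partitions n, durfee k l ∈ range (n + 1) := fun l hl =>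
    mem_range.2 (Nat.lt_succ_of_le ((Nat.le_mul_self _).trans
      ((Nat.mul_le_mul_left _ (Nat.le_add_right _ k)).trans (durfee_mul_le hl))))
  simp_rw [coeff_durfee_term, partitionCount_eq_card, card_eq_sum_card_fiberwise hrange,
    Nat.cast_sum]
end
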